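/- A finite abstract simplicial complex K is minimal (i.e., no vertex of K is dominated by another vertex of K) if and only if K is isomorphic to N²(K). -/

import Mathlib

/-- `K` is an abstract simplicial complex: every member is nonempty and every
nonempty subset of a member belongs to `K`. -/
def IsComplex {V : Type*} (K : Set (Finset V)) : Prop :=
  (∀ σ ∈ K, σ.Nonempty) ∧ ∀ σ ∈ K, ∀ τ : Finset V, τ ⊆ σ → τ.Nonempty → τ ∈ K

/-- `v` is a vertex of `K`. -/
def IsVertex {V : Type*} (K : Set (Finset V)) (v : V) : Prop := {v} ∈ K

/-- `σ` is a maximal simplex of `K`. -/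
def IsMaximalSimplex {V : Type*} (K : Set (Finset V)) (σ : Finset V) : Prop :=
  σ ∈ K ∧ ∀ τ ∈ K, σ ⊆ τ → σ = τ

/-- The link of the vertex `v` in `K`. -/
def link {V : Type*} [DecidableEq V] (K : Set (Finset V)) (v : V) : Set (Finset V) :=
  {τ | τ ∈ K ∧ v ∉ τ ∧ τ ∪ {v} ∈ K}

/-- `v` is dominated by the vertex `v' ≠ v`: the link of `v` is a cone with apex `v'`. -/
def Dominated {V : Type*} [DecidableEq V] (K : Set (Finset V)) (v v' : V) : Prop :=
  v' ≠ v ∧ ({v'} : Finset V) ∈ link K v ∧ ∀ τ ∈ link K v, τ ∪ {v'} ∈ link K v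

/-- `K` is minimal: no vertex of `K` is dominated by another vertex. -/
def MinimalComplex {V : Type*} [DecidableEq V] (K : Set (Finset V)) : Prop :=
  ∀ v v' : V, ¬ Dominated K v v'

/-- The nerve of `K`: all nonempty finite sets of maximal simplices of `K`
with nonempty common intersection. -/
def nerve {V : Type*} (K : Set (Finset V)) : Set (Finset (Finset V)) :=
  {S | S.Nonempty ∧ (∀ σ ∈ S, IsMaximalSimplex K σ) ∧ ∃ x : V, ∀ σ ∈ S, x ∈ σ}

/-- `K` and `L` are isomorphic simplicial complexes: some vertex bijection `φ`
identifies the simplices of `K` with those of `L`. -/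
def Isomorphic {V W : Type*} [DecidableEq W]
    (K : Set (Finset V)) (L : Set (Finset W)) : Prop :=
  ∃ φ : V → W, Set.BijOn φ {v | IsVertex K v} {w | IsVertex L w} ∧
    ∀ σ : Finset V, (∀ v ∈ σ, IsVertex K v) → (σ ∈ K ↔ σ.image φ ∈ L)

/-!
Write `Σ(x)` for the set of maximal simplices of `K` containing `x`. The vertices of `N²(K)` are
the maximal simplices of `N(K)`, and these are exactly the maximal sets among the `Σ(x)`; on the
other hand `v` is dominated by `v'` exactly when `Σ(v) ⊆ Σ(v')`. So if `K` is minimal, `Σ` is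
injective, every `Σ(x)` is maximal, and `x ↦ Σ(x)` is an isomorphism `K ≅ N²(K)`. If `v` is
dominated by `v'`, every vertex of `N²(K)` is `Σ(x)` for some `x ≠ v`, so `N²(K)` has fewer
vertices than `K`.
-/

open Finset

section

variable {V : Type*} {K : Set (Finset V)}

theorem IsComplex.mem_of_subset (hK : IsComplex K) {σ τ : Finset V} (hσ : σ ∈ K) (hτσ : τ ⊆ σ)
    (hτ : τ.Nonempty) : τ ∈ K :=
  hK.2 σ hσ τ hτσ hτ

theorem IsComplex.isVertex_of_mem (hK : IsComplex K) {σ : Finset V} (hσ : σ ∈ K) {x : V}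
    (hx : x ∈ σ) : IsVertex K x :=
  hK.mem_of_subset hσ (singleton_subset_iff.2 hx) (singleton_nonempty x)

theorem IsMaximalSimplex.mem_of_insert_mem [DecidableEq V] {σ : Finset V}
    (hσ : IsMaximalSimplex K σ) {x : V} (hx : insert x σ ∈ K) : x ∈ σ := by
  rw [hσ.2 _ hx (subset_insert x σ)]
  exact mem_insert_self x σ

theorem exists_isMaximalSimplex_superset (hfin : K.Finite) {σ : Finset V} (hσ : σ ∈ K) :
    ∃ ρ, IsMaximalSimplex K ρ ∧ σ ⊆ ρ := by
  obtain ⟨ρ, hσρ, hρ⟩ := hfin.exists_le_maximal hσ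
  exact ⟨ρ, ⟨hρ.1, fun τ hτ hρτ => le_antisymm hρτ (hρ.2 hτ hρτ)⟩, hσρ⟩

section Domination

variable [DecidableEq V]

theorem dominated_iff_insert_mem (hK : IsComplex K) {v v' : V} :
    Dominated K v v' ↔ v' ≠ v ∧ IsVertex K v ∧ ∀ σ ∈ K, v ∈ σ → insert v' σ ∈ K := by
  simp only [Dominated, link, Set.mem_ofPred_eq, union_singleton]
  constructor
  · rintro ⟨hne, ⟨-, -, hpair⟩, hcone⟩
    refine ⟨hne, hK.isVertex_of_mem hpair (mem_insert_self v _), fun σ hσ hvσ => ?_⟩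
    rcases (σ.erase v).eq_empty_or_nonempty with hτ | hτ
    · rwa [(erase_eq_empty_iff σ v).1 hτ |>.resolve_left (ne_empty_of_mem hvσ), pair_comm]
    · have hlink : σ.erase v ∈ K ∧ v ∉ σ.erase v ∧ insert v (σ.erase v) ∈ K :=
        ⟨hK.mem_of_subset hσ (erase_subset v σ) hτ, notMem_erase v σ, by rwa [insert_erase hvσ]⟩
      have hcone' := (hcone _ hlink).2.2
      rwa [insert_comm, insert_erase hvσ] at hcone'
  · rintro ⟨hne, hv, hins⟩
    have hcone : ∀ τ ∈ K, v ∉ τ → insert v τ ∈ K →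
        insert v' τ ∈ K ∧ v ∉ insert v' τ ∧ insert v (insert v' τ) ∈ K := by
      intro τ hτ hvτ hvτK
      have h := hins _ hvτK (mem_insert_self v τ)
      rw [insert_comm] at h
      exact ⟨hK.mem_of_subset h (subset_insert v _) (insert_nonempty v' τ),
        by simp [hvτ, hne.symm], h⟩
    have hpair := hins {v} hv (mem_singleton_self v)
    refine ⟨hne, ⟨hK.mem_of_subset hpair (by simp) (singleton_nonempty v'),
      by simpa using hne.symm, by rwa [pair_comm]⟩, fun τ ⟨hτ, hvτ, hvτK⟩ => hcone τ hτ hvτ hvτK⟩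

end Domination

noncomputable def maximalStar (K : Set (Finset V)) (hfin : K.Finite) (x : V) :
    Finset (Finset V) :=
  (hfin.subset fun _ hσ => hσ.1.1 : {σ | IsMaximalSimplex K σ ∧ x ∈ σ}.Finite).toFinset

section MaximalStar

variable (hfin : K.Finite)

@[simp]
theorem mem_maximalStar {x : V} {σ : Finset V} :
    σ ∈ maximalStar K hfin x ↔ IsMaximalSimplex K σ ∧ x ∈ σ :=
  Set.Finite.mem_toFinset _

theorem maximalStar_subset_maximalStar_iff [DecidableEq V] (hK : IsComplex K) {v v' : V} :
    maximalStar K hfin v ⊆ maximalStar K hfin v' ↔ ∀ σ ∈ K, v ∈ σ → insert v' σ ∈ K := by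
  constructor
  · intro h σ hσ hvσ
    obtain ⟨ρ, hρ, hσρ⟩ := exists_isMaximalSimplex_superset hfin hσ
    have hv'ρ := ((mem_maximalStar hfin).1 (h ((mem_maximalStar hfin).2 ⟨hρ, hσρ hvσ⟩))).2
    exact hK.mem_of_subset hρ.1 (insert_subset hv'ρ hσρ) (insert_nonempty v' σ)
  · intro h ρ hρ
    rw [mem_maximalStar] at hρ ⊢
    exact ⟨hρ.1, hρ.1.mem_of_insert_mem (h ρ hρ.1.1 hρ.2)⟩

theorem dominated_iff [DecidableEq V] (hK : IsComplex K) {v v' : V} :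
    Dominated K v v' ↔
      v' ≠ v ∧ IsVertex K v ∧ maximalStar K hfin v ⊆ maximalStar K hfin v' := by
  rw [dominated_iff_insert_mem hK, maximalStar_subset_maximalStar_iff hfin hK]

theorem minimalComplex_iff [DecidableEq V] (hK : IsComplex K) :
    MinimalComplex K ↔ ∀ v v' : V, IsVertex K v →
      maximalStar K hfin v ⊆ maximalStar K hfin v' → v' = v := by
  simp only [MinimalComplex, dominated_iff hfin hK]
  exact forall₂_congr fun v v' => by tauto

theorem maximalStar_mem_nerve {x : V} (hx : IsVertex K x) : maximalStar K hfin x ∈ nerve K := by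
  obtain ⟨ρ, hρ, hxρ⟩ := exists_isMaximalSimplex_superset hfin hx
  refine ⟨⟨ρ, (mem_maximalStar hfin).2 ⟨hρ, singleton_subset_iff.1 hxρ⟩⟩,
    fun σ hσ => ((mem_maximalStar hfin).1 hσ).1, x, fun σ hσ => ((mem_maximalStar hfin).1 hσ).2⟩

theorem exists_subset_maximalStar_of_mem_nerve (hK : IsComplex K) {S : Finset (Finset V)}
    (hS : S ∈ nerve K) : ∃ x, IsVertex K x ∧ S ⊆ maximalStar K hfin x := by
  obtain ⟨⟨σ, hσ⟩, hmax, x, hx⟩ := hS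
  exact ⟨x, hK.isVertex_of_mem (hmax σ hσ).1 (hx σ hσ),
    fun τ hτ => (mem_maximalStar hfin).2 ⟨hmax τ hτ, hx τ hτ⟩⟩

theorem IsMaximalSimplex.exists_eq_maximalStar (hK : IsComplex K) {T : Finset (Finset V)}
    (hT : IsMaximalSimplex (nerve K) T) : ∃ x, IsVertex K x ∧ T = maximalStar K hfin x := by
  obtain ⟨x, hx, hTx⟩ := exists_subset_maximalStar_of_mem_nerve hfin hK hT.1
  exact ⟨x, hx, hT.2 _ (maximalStar_mem_nerve hfin hx) hTx⟩

end MaximalStar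

theorem isVertex_nerve_iff {W : Type*} {L : Set (Finset W)} (hL : ∀ σ ∈ L, σ.Nonempty)
    {σ : Finset W} : IsVertex (nerve L) σ ↔ IsMaximalSimplex L σ := by
  refine ⟨fun ⟨_, hmax, _⟩ => hmax σ (mem_singleton_self σ), fun hσ => ?_⟩
  obtain ⟨x, hx⟩ := hL σ hσ.1
  exact ⟨singleton_nonempty σ, by simpa using hσ, x, by simpa using hx⟩

theorem isVertex_nerve_nerve_iff {w : Finset (Finset V)} :
    IsVertex (nerve (nerve K)) w ↔ IsMaximalSimplex (nerve K) w :=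
  isVertex_nerve_iff fun _ hS => hS.1

section NerveSquared

variable [DecidableEq V]

theorem isMaximalSimplex_maximalStar_of_minimal (hK : IsComplex K) (hfin : K.Finite)
    (hmin : MinimalComplex K) {x : V} (hx : IsVertex K x) :
    IsMaximalSimplex (nerve K) (maximalStar K hfin x) := by
  refine ⟨maximalStar_mem_nerve hfin hx, fun T hT hxT => ?_⟩
  obtain ⟨y, -, hTy⟩ := exists_subset_maximalStar_of_mem_nerve hfin hK hT
  obtain rfl := (minimalComplex_iff hfin hK).1 hmin x y hx (hxT.trans hTy)
  exact hxT.antisymm hTy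

theorem bijOn_maximalStar_of_minimal (hK : IsComplex K) (hfin : K.Finite)
    (hmin : MinimalComplex K) :
    Set.BijOn (maximalStar K hfin) {v | IsVertex K v} {w | IsVertex (nerve (nerve K)) w} := by
  refine ⟨fun x hx => isVertex_nerve_nerve_iff.2
      (isMaximalSimplex_maximalStar_of_minimal hK hfin hmin hx),
    fun x hx y _ hxy => ((minimalComplex_iff hfin hK).1 hmin x y hx hxy.le).symm,
    fun w hw => ?_⟩
  obtain ⟨x, hx, rfl⟩ :=
    (isVertex_nerve_nerve_iff.1 hw).exists_eq_maximalStar hfin hK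
  exact ⟨x, hx, rfl⟩

theorem mem_iff_image_maximalStar_mem_nerve_nerve (hK : IsComplex K) (hfin : K.Finite)
    (hmin : MinimalComplex K) {σ : Finset V} (hσ : ∀ v ∈ σ, IsVertex K v) :
    σ ∈ K ↔ σ.image (maximalStar K hfin) ∈ nerve (nerve K) := by
  simp only [nerve, Set.mem_ofPred_eq, image_nonempty, forall_mem_image, mem_maximalStar]
  constructor
  · intro hσK
    obtain ⟨ρ, hρ, hσρ⟩ := exists_isMaximalSimplex_superset hfin hσK
    exact ⟨hK.1 σ hσK,
      fun v hv => isMaximalSimplex_maximalStar_of_minimal hK hfin hmin (hσ v hv),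
      ρ, fun v hv => ⟨hρ, hσρ hv⟩⟩
  · rintro ⟨hne, -, ρ, hρ⟩
    obtain ⟨v, hv⟩ := hne
    exact hK.mem_of_subset (hρ hv).1.1 (fun _ hw => (hρ hw).2) ⟨v, hv⟩

theorem isomorphic_nerve_nerve_of_minimal (hK : IsComplex K) (hfin : K.Finite)
    (hmin : MinimalComplex K) : Isomorphic K (nerve (nerve K)) :=
  ⟨maximalStar K hfin, bijOn_maximalStar_of_minimal hK hfin hmin,
    fun _ hσ => mem_iff_image_maximalStar_mem_nerve_nerve hK hfin hmin hσ⟩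

theorem setOf_isVertex_nerve_nerve_subset_of_dominated (hK : IsComplex K) (hfin : K.Finite)
    {v v' : V} (hd : Dominated K v v') :
    {w | IsVertex (nerve (nerve K)) w} ⊆ maximalStar K hfin '' ({x | IsVertex K x} \ {v}) := by
  obtain ⟨hne, -, hvv'⟩ := (dominated_iff hfin hK).1 hd
  intro w hw
  have hw := isVertex_nerve_nerve_iff.1 hw
  obtain ⟨x, hx, rfl⟩ := hw.exists_eq_maximalStar hfin hK
  rcases eq_or_ne x v with rfl | hxv
  · have hv' : IsVertex K v' := hd.2.1.1
    exact ⟨v', ⟨hv', hne⟩, (hw.2 _ (maximalStar_mem_nerve hfin hv') hvv').symm⟩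
  · exact ⟨x, ⟨hx, hxv⟩, rfl⟩

theorem minimal_of_isomorphic_nerve_nerve (hK : IsComplex K) (hfin : K.Finite)
    (h : Isomorphic K (nerve (nerve K))) : MinimalComplex K := by
  obtain ⟨φ, hφ, -⟩ := h
  intro v v' hd
  have hv : IsVertex K v := ((dominated_iff hfin hK).1 hd).2.1
  set A := {x | IsVertex K x}
  have hA : A.Finite := hfin.preimage singleton_injective.injOn
  have hlt := calc A.ncard
      = (φ '' A).ncard := hφ.injOn.ncard_image.symm
    _ = {w | IsVertex (nerve (nerve K)) w}.ncard := by rw [hφ.image_eq]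
    _ ≤ (maximalStar K hfin '' (A \ {v})).ncard :=
        Set.ncard_le_ncard (setOf_isVertex_nerve_nerve_subset_of_dominated hK hfin hd)
          (hA.sdiff.image _)
    _ ≤ (A \ {v}).ncard := Set.ncard_image_le hA.sdiff
    _ < A.ncard := Set.ncard_sdiff_singleton_lt_of_mem hv hA
  exact hlt.false

end NerveSquared

end

/-- A finite simplicial complex is minimal iff it is isomorphic to `N²(K)`. -/
theorem minimal_iff_iso_nerve_sq {V : Type*} [DecidableEq V]
    (K : Set (Finset V)) (hK : IsComplex K) (hfin : K.Finite) :
    MinimalComplex K ↔ Isomorphic K (nerve (nerve K)) :=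
  ⟨isomorphic_nerve_nerve_of_minimal hK hfin, minimal_of_isomorphic_nerve_nerve hK hfin⟩
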